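/- arXiv:1404.1357 — 3 statements merged into one kernel-verified Lean document; each statement's English description precedes it below -/
import Mathlib

section
/- Let n ∈ ℕ and let a, b, c, d be integers with ad − bc = 1. Then the diffeomorphism F of ℝ³ defined by F(x,y,z) = (x + n(bc·yz + (ac/2)(y² − y) + (bd/2)(z² − z)), ay + bz, cy + dz) normalizes the group Γ_n, i.e. F·Γ_n·F⁻¹ = Γ_n. -/
/-!
Every element of `Γ_n` is one of the maps `g(m,p,q) : (x,y,z) ↦ (x + nqy + m, y + p, z + q)`
with `(m,p,q) ∈ ℤ³`, and these compose by
`g(m,p,q) g(m',p',q') = g(m + m' + nqp', p + p', q + q')`.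
Conjugation by `F` sends `g(m,p,q)` to `g(m + Q(p,q), ap + bq, cp + dq)`, where
`Q(p,q) = n(bc·pq + ac·p(p-1)/2 + bd·q(q-1)/2)` is an integer; the cross terms cancel exactly
because `ad - bc = 1`. Since `(p,q) ↦ (ap + bq, cp + dq)` is a bijection of `ℤ²`, conjugation
by `F` permutes the maps `g(m,p,q)`, i.e. it maps `Γ_n` onto itself.
-/

noncomputable section

/-- The bijection `(x,y,z) ↦ (x + φ(y,z), y + ψ(z), z + b)` of `ℝ³`. -/
def affMap (φ : ℝ × ℝ → ℝ) (ψ : ℝ → ℝ) (b : ℝ) : Equiv.Perm (ℝ × ℝ × ℝ) where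
  toFun p := (p.1 + φ p.2, p.2.1 + ψ p.2.2, p.2.2 + b)
  invFun p := (p.1 - φ (p.2.1 - ψ (p.2.2 - b), p.2.2 - b), p.2.1 - ψ (p.2.2 - b), p.2.2 - b)
  left_inv := by rintro ⟨x, y, z⟩; simp
  right_inv := by rintro ⟨x, y, z⟩; simp

/-- The group `Γ_{n,c₁,c₂}`, generated by `(x,y,z) ↦ (x+1,y,z)`,
`(x,y,z) ↦ (x+c₁,y+1,z)` and `(x,y,z) ↦ (x+ny+c₂,y,z+1)`. -/
def Gamma (n : ℕ) (c₁ c₂ : ℝ) : Subgroup (Equiv.Perm (ℝ × ℝ × ℝ)) :=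
  Subgroup.closure
    { affMap (fun _ => 1) (fun _ => 0) 0,
      affMap (fun _ => c₁) (fun _ => 1) 0,
      affMap (fun q => n * q.1 + c₂) (fun _ => 0) 1 }

theorem eq_zpow_of_map_add {G : Type*} [Group G] (f : ℤ → G)
    (hf : ∀ j k, f (j + k) = f j * f k) (k : ℤ) : f k = f 1 ^ k := by
  have h := map_zpow (MonoidHom.mk' (f ∘ Multiplicative.toAdd) hf) (Multiplicative.ofAdd 1) k
  rw [← ofAdd_zsmul, zsmul_one, Int.cast_id] at h
  exact h

namespace Gamma

def elem (n : ℕ) (m p q : ℤ) : Equiv.Perm (ℝ × ℝ × ℝ) :=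
  affMap (fun s => n * q * s.1 + m) (fun _ => p) q

variable {n : ℕ}

theorem elem_mul (m p q m' p' q' : ℤ) :
    elem n m p q * elem n m' p' q' = elem n (m + m' + n * q * p') (p + p') (q + q') := by
  ext ⟨x, y, z⟩ <;>
  simp only [elem, affMap, Equiv.Perm.mul_apply, Equiv.coe_fn_mk] <;> push_cast <;> ring

theorem elem_zero : elem n 0 0 0 = 1 := by
  ext ⟨x, y, z⟩ <;> simp [elem, affMap]

theorem elem_zpow (m p q : ℤ) :
    elem n m 0 0 = elem n 1 0 0 ^ m ∧ elem n 0 p 0 = elem n 0 1 0 ^ p ∧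
      elem n 0 0 q = elem n 0 0 1 ^ q := by
  refine ⟨eq_zpow_of_map_add (fun k => elem n k 0 0) ?_ m,
    eq_zpow_of_map_add (fun k => elem n 0 k 0) ?_ p,
    eq_zpow_of_map_add (fun k => elem n 0 0 k) ?_ q⟩ <;>
  intro j k <;> simp [elem_mul]

theorem eq_closure_elem :
    Gamma n 0 0 = Subgroup.closure {elem n 1 0 0, elem n 0 1 0, elem n 0 0 1} := by
  rw [Gamma]
  congr 1
  simp [elem]

theorem elem_mem (m p q : ℤ) : elem n m p q ∈ Gamma n 0 0 := by
  have hgen : ∀ {g}, g ∈ ({elem n 1 0 0, elem n 0 1 0, elem n 0 0 1} : Set _) →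
      g ∈ Gamma n 0 0 :=
    fun hg => eq_closure_elem (n := n) ▸ Subgroup.subset_closure hg
  obtain ⟨hm, hp, hq⟩ := elem_zpow (n := n) m p q
  have hdecomp : elem n m p q = elem n m 0 0 * elem n 0 p 0 * elem n 0 0 q := by
    simp [elem_mul]
  rw [hdecomp, hm, hp, hq]
  exact mul_mem (mul_mem (zpow_mem (hgen (by simp)) m) (zpow_mem (hgen (by simp)) p))
    (zpow_mem (hgen (by simp)) q)

theorem coe_eq_range_elem :
    (Gamma n 0 0 : Set (Equiv.Perm (ℝ × ℝ × ℝ))) =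
      Set.range (fun v : ℤ × ℤ × ℤ => elem n v.1 v.2.1 v.2.2) := by
  refine Set.Subset.antisymm (fun π hπ => ?_) (Set.range_subset_iff.2 fun v => elem_mem _ _ _)
  rw [SetLike.mem_coe, eq_closure_elem] at hπ
  induction hπ using Subgroup.closure_induction with
  | mem g hg =>
    rcases hg with rfl | rfl | rfl
    exacts [⟨(1, 0, 0), rfl⟩, ⟨(0, 1, 0), rfl⟩, ⟨(0, 0, 1), rfl⟩]
  | one => exact ⟨(0, 0, 0), elem_zero⟩
  | mul _ _ _ _ hg hk =>
    obtain ⟨⟨m, p, q⟩, rfl⟩ := hg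
    obtain ⟨⟨m', p', q'⟩, rfl⟩ := hk
    exact ⟨(m + m' + n * q * p', p + p', q + q'), (elem_mul m p q m' p' q').symm⟩
  | inv _ _ hg =>
    obtain ⟨⟨m, p, q⟩, rfl⟩ := hg
    refine ⟨(n * q * p - m, -p, -q), (inv_eq_of_mul_eq_one_right ?_).symm⟩
    rw [elem_mul, ← elem_zero (n := n)]
    congr 1 <;> ring

def quadTerm (n : ℕ) (a b c d : ℤ) (y z : ℝ) : ℝ :=
  n * (b * c * y * z + (a * c / 2) * (y ^ 2 - y) + (b * d / 2) * (z ^ 2 - z))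

def quadTermInt (n : ℕ) (a b c d p q : ℤ) : ℤ :=
  n * (b * c * p * q + a * c * (p * (p - 1) / 2) + b * d * (q * (q - 1) / 2))

theorem cast_quadTermInt (a b c d p q : ℤ) :
    (quadTermInt n a b c d p q : ℝ) = quadTerm n a b c d p q := by
  have half_cast (k : ℤ) : ((k * (k - 1) / 2 : ℤ) : ℝ) = ((k : ℝ) ^ 2 - k) / 2 := by
    rw [Int.cast_div (Int.even_mul_pred_self k).two_dvd (by norm_num)]
    push_cast
    ring
  simp only [quadTermInt, quadTerm, Int.cast_mul, Int.cast_add, Int.cast_natCast, half_cast]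
  ring

def slMap (n : ℕ) (a b c d : ℤ) (h : a * d - b * c = 1) : Equiv.Perm (ℝ × ℝ × ℝ) where
  toFun v := (v.1 + quadTerm n a b c d v.2.1 v.2.2, a * v.2.1 + b * v.2.2, c * v.2.1 + d * v.2.2)
  invFun v := (v.1 - quadTerm n a b c d (d * v.2.1 - b * v.2.2) (-c * v.2.1 + a * v.2.2),
    d * v.2.1 - b * v.2.2, -c * v.2.1 + a * v.2.2)
  left_inv := by
    have hR : (a * d - b * c : ℝ) = 1 := by exact_mod_cast h
    rintro ⟨x, y, z⟩
    have hy : (d * (a * y + b * z) - b * (c * y + d * z) : ℝ) = y := by linear_combination y * hR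
    have hz : (-c * (a * y + b * z) + a * (c * y + d * z) : ℝ) = z := by linear_combination z * hR
    simp only [hy, hz, add_sub_cancel_right]
  right_inv := by
    have hR : (a * d - b * c : ℝ) = 1 := by exact_mod_cast h
    rintro ⟨x, y, z⟩
    simp only [sub_add_cancel, Prod.mk.injEq, true_and]
    constructor
    · linear_combination y * hR
    · linear_combination z * hR

theorem conj_slMap_elem {a b c d : ℤ} (h : a * d - b * c = 1) (m p q : ℤ) :
    MulAut.conj (slMap n a b c d h) (elem n m p q) =
      elem n (m + quadTermInt n a b c d p q) (a * p + b * q) (c * p + d * q) := by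
  have hR : (a * d - b * c : ℝ) = 1 := by exact_mod_cast h
  rw [MulAut.conj_apply, mul_inv_eq_iff_eq_mul]
  ext ⟨x, y, z⟩ <;>
  simp only [slMap, elem, affMap, Equiv.Perm.mul_apply, Equiv.coe_fn_mk] <;>
  push_cast [cast_quadTermInt, quadTerm]
  · linear_combination (-(n * q * y : ℝ)) * hR
  · ring
  · ring

end Gamma

/-- For `a,b,c,d ∈ ℤ` with `ad − bc = 1`, the diffeomorphism
`F(x,y,z) = (x + n(bc·yz + (ac/2)(y²−y) + (bd/2)(z²−z)), ay+bz, cy+dz)`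
normalizes `Γ_n = Γ_{n,0,0}`. -/
theorem stmt_10 (n : ℕ) (a b c d : ℤ) (h : a * d - b * c = 1) :
    ∃ F : Equiv.Perm (ℝ × ℝ × ℝ),
      (∀ x y z : ℝ, F (x, y, z) =
        (x + (n : ℝ) * ((b : ℝ) * (c : ℝ) * y * z + ((a : ℝ) * (c : ℝ) / 2) * (y ^ 2 - y)
            + ((b : ℝ) * (d : ℝ) / 2) * (z ^ 2 - z)),
          (a : ℝ) * y + (b : ℝ) * z, (c : ℝ) * y + (d : ℝ) * z)) ∧
      F ∈ Subgroup.normalizer (Gamma n 0 0 : Set (Equiv.Perm (ℝ × ℝ × ℝ))) := by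
  refine ⟨Gamma.slMap n a b c d h, fun _ _ _ => rfl, ?_⟩
  let τ (v : ℤ × ℤ × ℤ) : ℤ × ℤ × ℤ :=
    (v.1 + Gamma.quadTermInt n a b c d v.2.1 v.2.2, a * v.2.1 + b * v.2.2, c * v.2.1 + d * v.2.2)
  have hτ : Function.Surjective τ := by
    rintro ⟨m, p, q⟩
    refine ⟨(m - Gamma.quadTermInt n a b c d (d * p - b * q) (-c * p + a * q),
      d * p - b * q, -c * p + a * q), ?_⟩
    simp only [τ, sub_add_cancel, Prod.mk.injEq, true_and]
    constructor
    · linear_combination p * h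
    · linear_combination q * h
  have hconj : MulAut.conj (Gamma.slMap n a b c d h) ∘
      (fun v : ℤ × ℤ × ℤ => Gamma.elem n v.1 v.2.1 v.2.2) =
      (fun v : ℤ × ℤ × ℤ => Gamma.elem n v.1 v.2.1 v.2.2) ∘ τ :=
    funext fun v => Gamma.conj_slMap_elem h v.1 v.2.1 v.2.2
  rw [Subgroup.mem_normalizer_iff_conj_image_eq, Gamma.coe_eq_range_elem, ← Set.range_comp,
    hconj, hτ.range_comp]
end
end

section
/- Let n ∈ ℕ, ℓ ∈ ℤ, and let H : ℝ → ℝ be a smooth function satisfying H(z+1) = H(z) + ℓ for all z ∈ ℝ. Then the diffeomorphism F of ℝ³ defined by F(x,y,z) = (x + n(1/2 − z)·H(z) + (nℓ/2)·z², y − H(z), z) normalizes the group Γ_n, i.e. F·Γ_n·F⁻¹ = Γ_n. -/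
/-!
Write `F = affMap (fun (y, z) ↦ f z) ψ 0` with `ψ = -H` and `f z = n(1/2 - z)H(z) + (nℓ/2)z²`.
Since `f` and `ψ` depend only on `z`, `F` commutes with the translations in `x` and `y`. The
periodicity `H(z+1) = H(z) + ℓ` gives `ψ(z+1) = ψ(z) - ℓ` and `f(z+1) = f(z) + nψ(z)`, which is
exactly what makes `F c F⁻¹ = b^{-ℓ} c` for the third generator `c(x,y,z) = (x+ny, y, z+1)` and
the `y`-translation `b`. These two relations are preserved by `(f, ψ, ℓ) ↦ (-f, -ψ, -ℓ)`, which
turns `F` into `F⁻¹`, so `F⁻¹` also conjugates the generators into `Γ_n`.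
-/

noncomputable section

namespace Subgroup

variable {G : Type*} [Group G]

theorem mem_normalizer_closure_of_conj_mem {s : Set G} {g : G}
    (hconj : ∀ x ∈ s, g * x * g⁻¹ ∈ closure s)
    (hconj_inv : ∀ x ∈ s, g⁻¹ * x * g ∈ closure s) :
    g ∈ normalizer (closure s : Set G) := by
  rw [mem_normalizer_iff_map_conj_eq]
  refine le_antisymm ?_ ((closure_le _).2 fun x hx ↦ ⟨g⁻¹ * x * g, hconj_inv x hx, ?_⟩)
  · rw [MonoidHom.map_closure, closure_le]
    rintro _ ⟨x, hx, rfl⟩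
    exact hconj x hx
  · simp [mul_assoc]

end Subgroup

@[simp]
lemma affMap_apply (φ : ℝ × ℝ → ℝ) (ψ : ℝ → ℝ) (b : ℝ) (p : ℝ × ℝ × ℝ) :
    affMap φ ψ b p = (p.1 + φ p.2, p.2.1 + ψ p.2.2, p.2.2 + b) := rfl

lemma affMap_zero_inv (f ψ : ℝ → ℝ) :
    (affMap (fun w ↦ f w.2) ψ 0)⁻¹ = affMap (fun w ↦ -f w.2) (fun z ↦ -ψ z) 0 := by
  rw [inv_eq_iff_mul_eq_one]
  ext ⟨x, y, z⟩ <;> simp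

lemma commute_affMap_translation (f ψ : ℝ → ℝ) (r s : ℝ) :
    Commute (affMap (fun w ↦ f w.2) ψ 0) (affMap (fun _ ↦ r) (fun _ ↦ s) 0) := by
  ext ⟨x, y, z⟩ <;> simp <;> ring

def yShift : Multiplicative ℝ →* Equiv.Perm (ℝ × ℝ × ℝ) where
  toFun r := affMap (fun _ ↦ 0) (fun _ ↦ r.toAdd) 0
  map_one' := by ext ⟨x, y, z⟩ <;> simp
  map_mul' r s := by
    ext ⟨x, y, z⟩ <;> simp
    ring

lemma yShift_intCast_mem_Gamma (n : ℕ) (m : ℤ) :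
    yShift (.ofAdd (m : ℝ)) ∈ Gamma n 0 0 := by
  have hgen : yShift (.ofAdd 1) ∈ Gamma n 0 0 := Subgroup.subset_closure (by simp [yShift])
  simpa [← map_zpow, ← ofAdd_zsmul] using zpow_mem hgen m

lemma affMap_mul_shear {n : ℕ} {f ψ : ℝ → ℝ} {m : ℝ} (hψ : ∀ z, ψ (z + 1) = ψ z + m)
    (hf : ∀ z, f (z + 1) = f z + n * ψ z) :
    affMap (fun w ↦ f w.2) ψ 0 * affMap (fun q ↦ n * q.1 + 0) (fun _ ↦ 0) 1 =
      yShift (.ofAdd m) * affMap (fun q ↦ n * q.1 + 0) (fun _ ↦ 0) 1 *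
        affMap (fun w ↦ f w.2) ψ 0 := by
  ext ⟨x, y, z⟩ <;> simp [yShift, hψ, hf] <;> ring

lemma affMap_conj_mem_Gamma {n : ℕ} {f ψ : ℝ → ℝ} {m : ℤ}
    (hψ : ∀ z, ψ (z + 1) = ψ z + m)
    (hf : ∀ z, f (z + 1) = f z + n * ψ z) :
    ∀ g ∈ ({affMap (fun _ ↦ 1) (fun _ ↦ 0) 0, affMap (fun _ ↦ 0) (fun _ ↦ 1) 0,
        affMap (fun q ↦ n * q.1 + 0) (fun _ ↦ 0) 1} : Set (Equiv.Perm (ℝ × ℝ × ℝ))),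
      affMap (fun w ↦ f w.2) ψ 0 * g * (affMap (fun w ↦ f w.2) ψ 0)⁻¹ ∈ Gamma n 0 0 := by
  rintro g (rfl | rfl | rfl)
  · rw [(commute_affMap_translation f ψ 1 0).mul_inv_cancel]
    exact Subgroup.subset_closure (by simp)
  · rw [(commute_affMap_translation f ψ 0 1).mul_inv_cancel]
    exact Subgroup.subset_closure (by simp)
  · rw [mul_inv_eq_of_eq_mul (affMap_mul_shear hψ hf)]
    exact mul_mem (yShift_intCast_mem_Gamma n m) (Subgroup.subset_closure (by simp))

lemma affMap_mem_normalizer_Gamma {n : ℕ} {f ψ : ℝ → ℝ} {m : ℤ}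
    (hψ : ∀ z, ψ (z + 1) = ψ z + m)
    (hf : ∀ z, f (z + 1) = f z + n * ψ z) :
    affMap (fun w ↦ f w.2) ψ 0 ∈
      Subgroup.normalizer (Gamma n 0 0 : Set (Equiv.Perm (ℝ × ℝ × ℝ))) := by
  refine Subgroup.mem_normalizer_closure_of_conj_mem (affMap_conj_mem_Gamma hψ hf) ?_
  have hinv :
      (affMap (fun w ↦ -f w.2) (fun z ↦ -ψ z) 0)⁻¹ = affMap (fun w ↦ f w.2) ψ 0 := by
    rw [← affMap_zero_inv f ψ, inv_inv]
  rw [affMap_zero_inv, ← hinv]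
  exact affMap_conj_mem_Gamma (f := fun z ↦ -f z) (ψ := fun z ↦ -ψ z) (m := -m)
    (fun z ↦ by simp [hψ]; ring) (fun z ↦ by simp [hf]; ring)

theorem stmt_11_general (n : ℕ) (ℓ : ℤ) (H : ℝ → ℝ)
    (hHper : ∀ z : ℝ, H (z + 1) = H z + ℓ) :
    affMap (fun w => (n : ℝ) * (1 / 2 - w.2) * H w.2 + ((n : ℝ) * (ℓ : ℝ) / 2) * w.2 ^ 2)
        (fun z => -(H z)) 0 ∈ Subgroup.normalizer ((Gamma n 0 0 : Subgroup (Equiv.Perm (ℝ × ℝ × ℝ))) : Set (Equiv.Perm (ℝ × ℝ × ℝ))) := by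
  refine affMap_mem_normalizer_Gamma (m := -ℓ)
    (f := fun z ↦ (n : ℝ) * (1 / 2 - z) * H z + ((n : ℝ) * (ℓ : ℝ) / 2) * z ^ 2)
    (fun z ↦ ?_) (fun z ↦ ?_)
  · rw [hHper]
    push_cast
    ring
  · rw [hHper]
    ring

/-- For `ℓ ∈ ℤ` and a smooth `H : ℝ → ℝ` with `H(z+1) = H(z) + ℓ`, the diffeomorphism
`F(x,y,z) = (x + n(1/2 − z)H(z) + (nℓ/2)z², y − H(z), z)` normalizes `Γ_n = Γ_{n,0,0}`. -/
theorem stmt_11 (n : ℕ) (ℓ : ℤ) (H : ℝ → ℝ) (hH : ContDiff ℝ (⊤ : ℕ∞) H)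
    (hHper : ∀ z : ℝ, H (z + 1) = H z + ℓ) :
    affMap (fun w => (n : ℝ) * (1 / 2 - w.2) * H w.2 + ((n : ℝ) * (ℓ : ℝ) / 2) * w.2 ^ 2)
        (fun z => -(H z)) 0 ∈ Subgroup.normalizer ((Gamma n 0 0 : Subgroup (Equiv.Perm (ℝ × ℝ × ℝ))) : Set (Equiv.Perm (ℝ × ℝ × ℝ))) :=
  stmt_11_general n ℓ H hHper
end
end

section
/- Let n ∈ ℕ, Λ > 0, and L : ℝ → ℝ a smooth positive 1-periodic function. Define the vector field Y on ℝ³ by Y(x,y,z) = (nz, 1, 0) (i.e. Y = ∂y + nz·∂x), and the smooth field of symmetric bilinear forms g̃ = Λ((dx − nz·dy)⊗dz + dz⊗(dx − nz·dy)) + L(z)²·dy⊗dy. Then: (i) Y is Γ_n-invariant, i.e. Dγ_p(Y(p)) = Y(γ(p)) for all γ ∈ Γ_n and p ∈ ℝ³; (ii) the flow of Y at time t is Φᵗ(x,y,z) = (x + ntz, y + t, z); (iii) (Φᵗ)*g̃ = g̃ + 2nΛt·dz⊗dz for every t ∈ ℝ. In particular, if n ≠ 0, then Φᵗ is not an isometry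 of g̃ for any t ≠ 0, although it preserves the Levi-Civita connection of g̃. -/
/-!
Every element of `Γ_n` is an affine map `(x,y,z) ↦ (x + ncy + a, y + b, z + c)`; such maps form a
group, and their constant differential `(u,v,w) ↦ (u + ncv, v, w)` sends `Y(p) = (nz, 1, 0)` to
`(nz + nc, 1, 0) = Y(γ p)`. Since `Y` does not depend on `x` and `y` and has vanishing
`z`-component, its flow is `p ↦ p + t·Y(p)`, whose differential is the shear
`(u,v,w) ↦ (u + ntw, v, w)`. Pulling back, `dx - nz·dy` becomes `dx - nz·dy + nt·dz`, which
produces the extra term `2nΛt·dz⊗dz`.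
-/

noncomputable section

/-- The vector field `Y = ∂y + nz·∂x` on `ℝ³`. -/
def fieldY (n : ℕ) : ℝ × ℝ × ℝ → ℝ × ℝ × ℝ := fun p => ((n : ℝ) * p.2.2, 1, 0)

/-- The time-`t` map `Φᵗ(x,y,z) = (x + ntz, y + t, z)`. -/
def flowY (n : ℕ) (t : ℝ) : ℝ × ℝ × ℝ → ℝ × ℝ × ℝ :=
  fun p => (p.1 + (n : ℝ) * t * p.2.2, p.2.1 + t, p.2.2)

/-- The metric `g̃ = Λ((dx − nz·dy)⊗dz + dz⊗(dx − nz·dy)) + L(z)²·dy⊗dy`. -/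
def gFifteen (n : ℕ) (Λ : ℝ) (L : ℝ → ℝ) (p u v : ℝ × ℝ × ℝ) : ℝ :=
  Λ * ((u.1 - n * p.2.2 * u.2.1) * v.2.2 + u.2.2 * (v.1 - n * p.2.2 * v.2.1))
    + (L p.2.2) ^ 2 * u.2.1 * v.2.1

def shear (m c : ℝ) : (ℝ × ℝ × ℝ) →L[ℝ] (ℝ × ℝ × ℝ) :=
  (ContinuousLinearMap.fst ℝ ℝ (ℝ × ℝ) +
    m • (ContinuousLinearMap.fst ℝ ℝ ℝ).comp (ContinuousLinearMap.snd ℝ ℝ (ℝ × ℝ)) +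
    c • (ContinuousLinearMap.snd ℝ ℝ ℝ).comp (ContinuousLinearMap.snd ℝ ℝ (ℝ × ℝ))).prod
    (ContinuousLinearMap.snd ℝ ℝ (ℝ × ℝ))

@[simp]
lemma shear_apply (m c : ℝ) (u : ℝ × ℝ × ℝ) :
    shear m c u = (u.1 + m * u.2.1 + c * u.2.2, u.2.1, u.2.2) :=
  rfl

lemma fderiv_shear_add (m c : ℝ) (v p : ℝ × ℝ × ℝ) :
    fderiv ℝ (fun q => shear m c q + v) p = shear m c :=
  ((shear m c).hasFDerivAt.add_const v).fderiv

def shearGroup (n : ℕ) : Subgroup (Equiv.Perm (ℝ × ℝ × ℝ)) where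
  carrier := {γ | ∃ a b c : ℝ, ⇑γ = fun q => shear (n * c) 0 q + (a, b, c)}
  one_mem' := ⟨0, 0, 0, by ext q <;> simp⟩
  mul_mem' := by
    rintro γ δ ⟨a, b, c, hγ⟩ ⟨a', b', c', hδ⟩
    refine ⟨a + a' + n * c * b', b + b', c + c', ?_⟩
    rw [Equiv.Perm.coe_mul, hγ, hδ]
    ext q <;> simp only [Function.comp_apply, shear_apply, Prod.fst_add, Prod.snd_add] <;> ring
  inv_mem' := by
    rintro γ ⟨a, b, c, hγ⟩
    refine ⟨n * c * b - a, -b, -c, ?_⟩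
    funext q
    rw [Equiv.Perm.inv_eq_iff_eq, hγ]
    ext <;> simp only [shear_apply, Prod.fst_add, Prod.snd_add] <;> ring

lemma Gamma_le_shearGroup (n : ℕ) (c₁ c₂ : ℝ) : Gamma n c₁ c₂ ≤ shearGroup n := by
  refine Subgroup.closure_le _ |>.mpr ?_
  rintro γ (rfl | rfl | rfl)
  · exact ⟨1, 0, 0, by ext q <;> simp [affMap]⟩
  · exact ⟨c₁, 1, 0, by ext q <;> simp [affMap]⟩
  · exact ⟨c₂, 0, 1, by ext q <;> simp [affMap, add_assoc, mul_comm]⟩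

lemma fderiv_apply_fieldY_of_mem_shearGroup {n : ℕ} {γ : Equiv.Perm (ℝ × ℝ × ℝ)}
    (hγ : γ ∈ shearGroup n) (p : ℝ × ℝ × ℝ) :
    fderiv ℝ (⇑γ) p (fieldY n p) = fieldY n (γ p) := by
  obtain ⟨a, b, c, hγ⟩ := hγ
  rw [hγ, fderiv_shear_add]
  ext <;> simp [fieldY]
  ring

lemma flowY_eq_smul_fieldY_add (n : ℕ) (t : ℝ) (p : ℝ × ℝ × ℝ) :
    flowY n t p = t • fieldY n p + p := by
  ext <;> simp [flowY, fieldY] <;> ring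

lemma flowY_eq_shear_add (n : ℕ) (t : ℝ) :
    flowY n t = fun q => shear 0 (n * t) q + (0, t, 0) := by
  ext q <;> simp [flowY]

lemma fieldY_flowY (n : ℕ) (t : ℝ) (p : ℝ × ℝ × ℝ) : fieldY n (flowY n t p) = fieldY n p :=
  rfl

lemma hasDerivAt_flowY (n : ℕ) (t : ℝ) (p : ℝ × ℝ × ℝ) :
    HasDerivAt (fun s => flowY n s p) (fieldY n (flowY n t p)) t := by
  rw [fieldY_flowY]
  simp_rw [flowY_eq_smul_fieldY_add]
  simpa using ((hasDerivAt_id t).smul_const (fieldY n p)).add_const p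

lemma gFifteen_flowY_pullback (n : ℕ) (Λ : ℝ) (L : ℝ → ℝ) (t : ℝ) (p u v : ℝ × ℝ × ℝ) :
    gFifteen n Λ L (flowY n t p) (fderiv ℝ (flowY n t) p u) (fderiv ℝ (flowY n t) p v)
      = gFifteen n Λ L p u v + 2 * n * Λ * t * (u.2.2 * v.2.2) := by
  rw [flowY_eq_shear_add, fderiv_shear_add]
  simp only [gFifteen, shear_apply, Prod.snd_add, add_zero]
  ring

theorem stmt_15_general (n : ℕ) (Λ : ℝ)
    (L : ℝ → ℝ) :
    (∀ γ ∈ Gamma n 0 0, ∀ p : ℝ × ℝ × ℝ,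
      fderiv ℝ (⇑γ) p (fieldY n p) = fieldY n (γ p)) ∧
    ((∀ p : ℝ × ℝ × ℝ, flowY n 0 p = p) ∧
      ∀ (p : ℝ × ℝ × ℝ) (t : ℝ),
        HasDerivAt (fun s => flowY n s p) (fieldY n (flowY n t p)) t) ∧
    (∀ (t : ℝ) (p u v : ℝ × ℝ × ℝ),
      gFifteen n Λ L (flowY n t p)
          (fderiv ℝ (flowY n t) p u) (fderiv ℝ (flowY n t) p v)
        = gFifteen n Λ L p u v + 2 * n * Λ * t * (u.2.2 * v.2.2)) :=
  ⟨fun _ hγ => fderiv_apply_fieldY_of_mem_shearGroup (Gamma_le_shearGroup n 0 0 hγ),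
    ⟨fun p => by simp [flowY_eq_smul_fieldY_add], fun p t => hasDerivAt_flowY n t p⟩,
    gFifteen_flowY_pullback n Λ L⟩

/-- (i) `Y = ∂y + nz∂x` is `Γ_n`-invariant; (ii) its flow at time `t` is
`Φᵗ(x,y,z) = (x + ntz, y + t, z)`; (iii) `(Φᵗ)*g̃ = g̃ + 2nΛt·dz⊗dz`. -/
theorem stmt_15 (n : ℕ) (Λ : ℝ) (hΛ : 0 < Λ)
    (L : ℝ → ℝ) (hLs : ContDiff ℝ (⊤ : ℕ∞) L) (hLpos : ∀ z : ℝ, 0 < L z)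
    (hLper : ∀ z : ℝ, L (z + 1) = L z) :
    (∀ γ ∈ Gamma n 0 0, ∀ p : ℝ × ℝ × ℝ,
      fderiv ℝ (⇑γ) p (fieldY n p) = fieldY n (γ p)) ∧
    ((∀ p : ℝ × ℝ × ℝ, flowY n 0 p = p) ∧
      ∀ (p : ℝ × ℝ × ℝ) (t : ℝ),
        HasDerivAt (fun s => flowY n s p) (fieldY n (flowY n t p)) t) ∧
    (∀ (t : ℝ) (p u v : ℝ × ℝ × ℝ),
      gFifteen n Λ L (flowY n t p)
          (fderiv ℝ (flowY n t) p u) (fderiv ℝ (flowY n t) p v)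
        = gFifteen n Λ L p u v + 2 * n * Λ * t * (u.2.2 * v.2.2)) :=
  stmt_15_general n Λ L
end
end
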